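/- Let Φ₁,Φ₂:ℕ→(0,∞) be functions tending to infinity. Suppose liminf_{n→∞} (log log Φ₁(n))/n = +∞ and (log log Φ₂(n))/n → +∞. Then dim_H F(Φ₁,Φ₂) = 0; in particular, F(Φ₁,Φ₂) is either empty or has Hausdorff dimension zero. -/

import Mathlib

open Filter MeasureTheory Set
open scoped ENNReal NNReal

noncomputable section

/-- The Gauss map `T(x) = 1/x - ⌊1/x⌋` on `[0,1)`, with `T 0 = 0`. -/
def gaussMap (x : ℝ) : ℝ := Int.fract (1 / x)

/-- The `n`-th partial quotient `a_n(x) = ⌊1 / T^[n-1] x⌋` (for `n ≥ 1`). -/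
def pq (x : ℝ) (n : ℕ) : ℤ := ⌊1 / gaussMap^[n - 1] x⌋

/-- The continuant `q_n(a_1, …, a_n)`, given by `q_{-1} = 0`, `q_0 = 1`,
`q_k = a_k q_{k-1} + q_{k-2}`. -/
def contQ : List ℕ → ℕ
  | [] => 1
  | [a] => a
  | a :: b :: l => a * contQ (b :: l) + contQ l

/-- `q_n(a_1,…,a_n)` for a tuple of positive integers. -/
def qTuple {n : ℕ} (f : Fin n → ℕ+) : ℕ := contQ (List.ofFn fun i => (f i : ℕ))

/-- The condition `limsup_{n→∞} (1/n)·log S_n ≤ 0`, the logarithm taken in `[0,∞]`. -/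
def PressureNonpos (S : ℕ → ℝ≥0∞) : Prop :=
  Filter.limsup (fun n : ℕ => (((n : ℝ)⁻¹ : ℝ) : EReal) * ENNReal.log (S n)) Filter.atTop ≤ 0

/-- `s₀(B)`. -/
def s0 (B : ℝ) : ℝ :=
  sInf {s : ℝ | 0 ≤ s ∧ PressureNonpos fun n =>
    ∑' f : Fin n → ℕ+, (ENNReal.ofReal (B ^ (s * n)) * (qTuple f : ℝ≥0∞) ^ 2) ^ (-s)}

/-- `s_B`. -/
def sB (B : ℝ) : ℝ :=
  sInf {s : ℝ | 0 ≤ s ∧ PressureNonpos fun n =>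
    ∑' f : Fin n → ℕ+, (ENNReal.ofReal (B ^ (n : ℝ)) * (qTuple f : ℝ≥0∞) ^ 2) ^ (-s)}

/-- `g_{B₁,B₂}`. -/
def gB (B₁ B₂ : ℝ) : ℝ :=
  sInf {s : ℝ | 0 ≤ s ∧ PressureNonpos fun n =>
    ∑' f : Fin n → ℕ+, ENNReal.ofReal (B₂ ^ ((1 - s) * n)) *
      (ENNReal.ofReal (B₁ ^ (n : ℝ)) * (qTuple f : ℝ≥0∞) ^ 2) ^ (-s)}

/-- The set `F(Φ₁, Φ₂)`. -/
def FSet (Φ₁ Φ₂ : ℕ → ℝ) : Set ℝ :=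
  {x | Irrational x ∧ x ∈ Set.Ioo (0 : ℝ) 1 ∧
    (∃ᶠ n in atTop, Φ₁ n ≤ ((pq x n * pq x (n + 1) : ℤ) : ℝ)) ∧
    (∀ᶠ n in atTop, ((pq x (n + 1) : ℤ) : ℝ) < Φ₂ n)}

/-!
If `a_n(x) a_{n+1}(x) ≥ Φ₁(n)` infinitely often and `log log Φ₁(n) / n → ∞`, then for every
`b > 1` some partial quotient satisfies `a_n(x) ≥ exp (b ^ n)`. Cover the set of such `x` by the
first index `n` at which this happens: the earlier quotients range over at most
`∏_{j<n} exp (b ^ j) ≤ exp (b ^ n / (b - 1))` values, and each choice leaves a set of diameter at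
most `exp (-b ^ n)`. For `b ≥ 1 + 2 / s` the `s`-dimensional sum of this cover is at most
`∑ₙ exp (-(s / 2) (b - 1) n)`, which tends to `0` as `b → ∞`.
-/

open Real Topology

theorem hausdorffMeasure_eq_zero_of_forall_tsum_le {X : Type*} [EMetricSpace X]
    [MeasurableSpace X] [BorelSpace X] {s : ℝ} (hs : 0 < s) {E : Set X}
    (h : ∀ ε > 0, ∃ (ι : Type) (_ : Countable ι) (t : ι → Set X),
      E ⊆ ⋃ i, t i ∧ ∑' i, Metric.ediam (t i) ^ s ≤ ENNReal.ofReal ε) :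
    μH[s] E = 0 := by
  choose ι hι t hcover hsum using fun n : ℕ => h (1 / (n + 1)) Nat.one_div_pos_of_nat
  set ε : ℕ → ℝ≥0∞ := fun n => ENNReal.ofReal (1 / (n + 1))
  have hε : Tendsto ε atTop (𝓝 0) := by
    rw [← ENNReal.ofReal_zero]
    exact ENNReal.tendsto_ofReal tendsto_one_div_add_atTop_nhds_zero_nat
  -- a single term of the sum bounds the diameter: `diam ^ s ≤ ε`
  have hdiam : ∀ n i, Metric.ediam (t n i) ≤ ε n ^ s⁻¹ := fun n i => by
    rw [← ENNReal.rpow_le_rpow_iff hs, ENNReal.rpow_inv_rpow hs.ne']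
    exact (ENNReal.le_tsum i).trans (hsum n)
  have hr : Tendsto (fun n => ε n ^ s⁻¹) atTop (𝓝 0) := by
    have := (ENNReal.continuous_rpow_const (y := s⁻¹)).tendsto 0
    rw [ENNReal.zero_rpow_of_pos (inv_pos.2 hs)] at this
    exact this.comp hε
  have hlim : Tendsto (fun n => ∑' i, Metric.ediam (t n i) ^ s) atTop (𝓝 0) :=
    tendsto_of_tendsto_of_tendsto_of_le_of_le tendsto_const_nhds hε (fun _ => zero_le) hsum
  refine le_antisymm ?_ zero_le
  calc μH[s] E ≤ liminf (fun n => ∑' i, Metric.ediam (t n i) ^ s) atTop :=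
        Measure.hausdorffMeasure_le_liminf_tsum s E _ hr t (Eventually.of_forall hdiam)
          (Eventually.of_forall hcover)
    _ = 0 := hlim.liminf_eq

lemma pq_succ (x : ℝ) (n : ℕ) : pq x (n + 1) = ⌊1 / gaussMap^[n] x⌋ := rfl

lemma gaussMap_lt_one (x : ℝ) : gaussMap x < 1 := Int.fract_lt_one _

lemma irrational_gaussMap {x : ℝ} (hx : Irrational x) : Irrational (gaussMap x) := by
  have h : Irrational (1 / x) := by rw [one_div]; exact hx.inv
  exact h.sub_intCast ⌊1 / x⌋

lemma gaussMap_pos {x : ℝ} (hx : Irrational x) : 0 < gaussMap x :=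
  (Int.fract_nonneg _).lt_of_ne' (irrational_gaussMap hx).ne_zero

lemma irrational_iterate_gaussMap {x : ℝ} (hx : Irrational x) (n : ℕ) :
    Irrational (gaussMap^[n] x) :=
  Function.Iterate.rec Irrational hx (fun _ => irrational_gaussMap) n

lemma iterate_gaussMap_mem_Ioo {x : ℝ} (hx : Irrational x) (hx01 : x ∈ Ioo 0 1) :
    ∀ n, gaussMap^[n] x ∈ Ioo 0 1
  | 0 => hx01
  | n + 1 => by
    rw [Function.iterate_succ_apply']
    exact ⟨gaussMap_pos (irrational_iterate_gaussMap hx n), gaussMap_lt_one _⟩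

lemma one_le_pq {x : ℝ} (hx : Irrational x) (hx01 : x ∈ Ioo 0 1) (n : ℕ) : 1 ≤ pq x (n + 1) := by
  obtain ⟨h0, h1⟩ := iterate_gaussMap_mem_Ioo hx hx01 n
  rw [pq_succ, Int.le_floor, Int.cast_one, le_div_iff₀ h0, one_mul]
  exact h1.le

lemma abs_sub_le_abs_gaussMap_sub {x y : ℝ} (hx : x ∈ Ioo 0 1) (hy : y ∈ Ioo 0 1)
    (h : ⌊1 / x⌋ = ⌊1 / y⌋) : |x - y| ≤ |gaussMap x - gaussMap y| := by
  have hT : gaussMap x - gaussMap y = 1 / x - 1 / y := by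
    simp only [gaussMap, Int.fract, h]
    ring
  have hxy : x - y = x * y * (1 / y - 1 / x) := by
    field_simp [hx.1.ne', hy.1.ne']
  have hxy1 : |x| * |y| ≤ 1 := by
    rw [abs_of_pos hx.1, abs_of_pos hy.1]
    exact mul_le_one₀ hx.2.le hy.1.le hy.2.le
  rw [hT, hxy, abs_mul, abs_mul, abs_sub_comm (1 / y)]
  exact mul_le_of_le_one_left (abs_nonneg _) hxy1

lemma abs_sub_le_abs_iterate_gaussMap_sub {x y : ℝ} (hx : Irrational x) (hx01 : x ∈ Ioo 0 1)
    (hy : Irrational y) (hy01 : y ∈ Ioo 0 1) {k : ℕ}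
    (h : ∀ j < k, pq x (j + 1) = pq y (j + 1)) :
    |x - y| ≤ |gaussMap^[k] x - gaussMap^[k] y| := by
  induction k with
  | zero => simp
  | succ k ih =>
    rw [Function.iterate_succ_apply', Function.iterate_succ_apply']
    exact (ih fun j hj => h j (by omega)).trans <| abs_sub_le_abs_gaussMap_sub
      (iterate_gaussMap_mem_Ioo hx hx01 k) (iterate_gaussMap_mem_Ioo hy hy01 k) (h k k.lt_succ_self)

lemma mem_Ioc_of_le_floor_one_div {K u : ℝ} (hK : 0 < K) (h : K ≤ ⌊1 / u⌋) : u ∈ Ioc 0 K⁻¹ := by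
  have h' : K ≤ 1 / u := h.trans (Int.floor_le _)
  have hu : 0 < u := one_div_pos.1 (hK.trans_le h')
  rw [one_div] at h'
  exact ⟨hu, (le_inv_comm₀ hK hu).1 h'⟩

def cylinderGe (k : ℕ) (f : Fin k → ℤ) (K : ℝ) : Set ℝ :=
  {x | Irrational x ∧ x ∈ Ioo 0 1 ∧ (∀ j : Fin k, pq x (j + 1) = f j) ∧ K ≤ pq x (k + 1)}

lemma ediam_cylinderGe_le {k : ℕ} {f : Fin k → ℤ} {K : ℝ} (hK : 0 < K) :
    Metric.ediam (cylinderGe k f K) ≤ ENNReal.ofReal K⁻¹ := by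
  refine Metric.ediam_le fun x ⟨hx, hx01, hxf, hxK⟩ y ⟨hy, hy01, hyf, hyK⟩ => ?_
  rw [edist_dist, Real.dist_eq]
  refine ENNReal.ofReal_le_ofReal ?_
  have hu := mem_Ioc_of_le_floor_one_div (u := gaussMap^[k] x) hK hxK
  have hv := mem_Ioc_of_le_floor_one_div (u := gaussMap^[k] y) hK hyK
  calc |x - y| ≤ |gaussMap^[k] x - gaussMap^[k] y| :=
        abs_sub_le_abs_iterate_gaussMap_sub hx hx01 hy hy01 fun j hj =>
          (hxf ⟨j, hj⟩).trans (hyf ⟨j, hj⟩).symm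
    _ ≤ K⁻¹ := abs_sub_le_iff.2 ⟨by linarith [hu.2, hv.1], by linarith [hu.1, hv.2]⟩

def digitBox (A : ℕ → ℝ) (k : ℕ) : Finset (Fin k → ℤ) :=
  Fintype.piFinset fun j => Finset.Icc 1 ⌊A (j + 1)⌋

lemma card_digitBox_le {A : ℕ → ℝ} (hA : ∀ n, 0 ≤ A n) (k : ℕ) :
    ((digitBox A k).card : ℝ) ≤ ∏ j ∈ Finset.range k, A (j + 1) := by
  rw [digitBox, Fintype.card_piFinset, ← Fin.prod_univ_eq_prod_range (fun j => A (j + 1))]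
  push_cast
  gcongr with j
  rw [Int.card_Icc, add_sub_cancel_right, Int.floor_toNat]
  exact Nat.floor_le (hA _)

lemma subset_iUnion_cylinderGe (A : ℕ → ℝ) :
    {x | Irrational x ∧ x ∈ Ioo 0 1 ∧ ∃ n, A (n + 1) ≤ pq x (n + 1)} ⊆
      ⋃ p : Σ k, digitBox A k, cylinderGe p.1 p.2 (A (p.1 + 1)) := by
  classical
  rintro x ⟨hx, hx01, hex⟩
  have hbox : (fun j : Fin (Nat.find hex) => pq x (j + 1)) ∈ digitBox A (Nat.find hex) :=
    Fintype.mem_piFinset.2 fun j => Finset.mem_Icc.2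
      ⟨one_le_pq hx hx01 j, Int.le_floor.2 (not_le.1 (Nat.find_min hex j.2)).le⟩
  exact mem_iUnion.2 ⟨⟨_, _, hbox⟩, hx, hx01, fun _ => rfl, Nat.find_spec hex⟩

lemma tsum_ediam_cylinderGe_rpow_le {A : ℕ → ℝ} (hA : ∀ n, 0 < A n) {s : ℝ} (hs : 0 ≤ s) :
    ∑' p : Σ k, digitBox A k, Metric.ediam (cylinderGe p.1 p.2 (A (p.1 + 1))) ^ s ≤
      ∑' k, ENNReal.ofReal ((∏ j ∈ Finset.range k, A (j + 1)) * A (k + 1) ^ (-s)) := by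
  rw [ENNReal.tsum_sigma']
  refine ENNReal.tsum_le_tsum fun k => ?_
  have hterm (f : Fin k → ℤ) :
      Metric.ediam (cylinderGe k f (A (k + 1))) ^ s ≤ ENNReal.ofReal (A (k + 1) ^ (-s)) := by
    calc _ ≤ ENNReal.ofReal (A (k + 1))⁻¹ ^ s :=
          ENNReal.rpow_le_rpow (ediam_cylinderGe_le (hA _)) hs
      _ = _ := by
        rw [ENNReal.ofReal_rpow_of_nonneg (inv_nonneg.2 (hA _).le) hs, Real.inv_rpow (hA _).le,
          Real.rpow_neg (hA _).le]
  calc ∑' f : digitBox A k, Metric.ediam (cylinderGe k f (A (k + 1))) ^ s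
      = ∑ f ∈ digitBox A k, Metric.ediam (cylinderGe k f (A (k + 1))) ^ s :=
        Finset.tsum_subtype _ fun f => Metric.ediam (cylinderGe k f (A (k + 1))) ^ s
    _ ≤ (digitBox A k).card • ENNReal.ofReal (A (k + 1) ^ (-s)) :=
        Finset.sum_le_card_nsmul _ _ _ fun f _ => hterm f
    _ = ENNReal.ofReal ((digitBox A k).card * A (k + 1) ^ (-s)) := by
        rw [nsmul_eq_mul, ENNReal.ofReal_mul (Nat.cast_nonneg _), ENNReal.ofReal_natCast]
    _ ≤ _ := ENNReal.ofReal_le_ofReal <| mul_le_mul_of_nonneg_right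
        (card_digitBox_le (fun n => (hA n).le) k) (Real.rpow_nonneg (hA _).le _)

lemma sum_range_pow_succ_le {b s : ℝ} (hs : 0 < s) (hb : 1 + 2 / s ≤ b) (k : ℕ) :
    ∑ j ∈ Finset.range k, b ^ (j + 1) ≤ s / 2 * b ^ (k + 1) := by
  have hsb : 2 ≤ s * (b - 1) := by
    have := mul_le_mul_of_nonneg_left hb hs.le
    rw [mul_add, mul_div_cancel₀ _ hs.ne'] at this
    linarith
  have hb0 : 0 ≤ b := by nlinarith
  set S := ∑ j ∈ Finset.range k, b ^ j
  have hgeom : S * (b - 1) = b ^ k - 1 := geom_sum_mul b k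
  have hS : 0 ≤ S := Finset.sum_nonneg fun j _ => pow_nonneg hb0 j
  have hS2 : 2 * S ≤ s * b ^ k := by nlinarith [mul_le_mul_of_nonneg_right hsb hS]
  simp_rw [pow_succ, ← Finset.sum_mul]
  nlinarith

lemma prod_exp_pow_mul_rpow_le {b s : ℝ} (hs : 0 < s) (hb : 1 + 2 / s ≤ b) (k : ℕ) :
    (∏ j ∈ Finset.range k, exp (b ^ (j + 1))) * exp (b ^ (k + 1)) ^ (-s) ≤
      exp (-(s / 2 * (b - 1))) ^ (k + 1) := by
  rw [← Real.exp_sum, ← Real.exp_mul, ← Real.exp_add, ← Real.exp_nat_mul, Real.exp_le_exp]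
  have hbern : 1 + ((k + 1 : ℕ) : ℝ) * (b - 1) ≤ b ^ (k + 1) := by
    have : 0 < 2 / s := by positivity
    simpa using one_add_mul_le_pow (a := b - 1) (by linarith) (k + 1)
  have := mul_le_mul_of_nonneg_left hbern (half_pos hs).le
  have := sum_range_pow_succ_le hs hb k
  push_cast at *
  nlinarith

lemma tsum_ofReal_pow_succ_le {q : ℝ} (hq0 : 0 ≤ q) (hq : q ≤ 1 / 2) :
    ∑' k : ℕ, ENNReal.ofReal (q ^ (k + 1)) ≤ ENNReal.ofReal (2 * q) := by
  have hq1 : q < 1 := by linarith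
  simp_rw [pow_succ']
  rw [← ENNReal.ofReal_tsum_of_nonneg (fun k => mul_nonneg hq0 (pow_nonneg hq0 k))
    ((summable_geometric_of_lt_one hq0 hq1).mul_left q), tsum_mul_left,
    tsum_geometric_of_lt_one hq0 hq1]
  refine ENNReal.ofReal_le_ofReal ?_
  rw [mul_comm 2]
  exact mul_le_mul_of_nonneg_left (by rw [inv_le_comm₀ (by linarith) two_pos]; linarith) hq0

def rapidDigitSet : Set ℝ :=
  {x | Irrational x ∧ x ∈ Ioo 0 1 ∧ ∀ b > 1, ∃ n : ℕ, exp (b ^ (n + 1)) ≤ pq x (n + 1)}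

theorem hausdorffMeasure_rapidDigitSet_eq_zero {s : ℝ} (hs : 0 < s) : μH[s] rapidDigitSet = 0 := by
  refine hausdorffMeasure_eq_zero_of_forall_tsum_le hs fun ε hε => ?_
  obtain ⟨b, hb, hq⟩ : ∃ b, 1 + 2 / s ≤ b ∧ exp (-(s / 2 * (b - 1))) ≤ min (1 / 2) (ε / 2) := by
    have : Tendsto (fun b => exp (-(s / 2 * (b - 1)))) atTop (𝓝 0) :=
      Real.tendsto_exp_neg_atTop_nhds_zero.comp
        ((tendsto_atTop_add_const_right _ (-1) tendsto_id).const_mul_atTop (half_pos hs))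
    exact ((eventually_ge_atTop _).and (this.eventually (ge_mem_nhds (by positivity)))).exists
  set A : ℕ → ℝ := fun n => exp (b ^ n)
  refine ⟨Σ k, digitBox A k, inferInstance, fun p => cylinderGe p.1 p.2 (A (p.1 + 1)), ?_, ?_⟩
  · have hb1 : 1 < b := by linarith [show 0 < 2 / s by positivity]
    refine Subset.trans ?_ (subset_iUnion_cylinderGe A)
    rintro x ⟨hx, hx01, hbig⟩
    exact ⟨hx, hx01, hbig b hb1⟩
  · calc _ ≤ ∑' k, ENNReal.ofReal ((∏ j ∈ Finset.range k, A (j + 1)) * A (k + 1) ^ (-s)) :=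
          tsum_ediam_cylinderGe_rpow_le (fun n => exp_pos _) hs.le
      _ ≤ ∑' k : ℕ, ENNReal.ofReal (exp (-(s / 2 * (b - 1))) ^ (k + 1)) :=
          ENNReal.tsum_le_tsum fun k => ENNReal.ofReal_le_ofReal (prod_exp_pow_mul_rpow_le hs hb k)
      _ ≤ ENNReal.ofReal (2 * exp (-(s / 2 * (b - 1)))) :=
          tsum_ofReal_pow_succ_le (exp_pos _).le (hq.trans (min_le_left _ _))
      _ ≤ ENNReal.ofReal ε :=
          ENNReal.ofReal_le_ofReal (by linarith [hq.trans (min_le_right _ _)])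

theorem dimH_rapidDigitSet : dimH rapidDigitSet = 0 := by
  refine le_antisymm (dimH_le fun d hd => ?_) zero_le
  by_contra! hpos
  rw [hausdorffMeasure_rapidDigitSet_eq_zero (by exact_mod_cast ENNReal.coe_pos.1 hpos)] at hd
  exact ENNReal.zero_ne_top hd

lemma eventually_exp_pow_le_of_liminf_eq_top {Φ : ℕ → ℝ} (hΦ : ∀ᶠ n in atTop, 1 < Φ n)
    (h : liminf (fun n : ℕ => ((log (log (Φ n)) / n : ℝ) : EReal)) atTop = ⊤) {b : ℝ}
    (hb : 0 < b) : ∀ᶠ n in atTop, exp (b ^ n) ≤ Φ n := by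
  have hlt : ∀ᶠ n : ℕ in atTop, ((log b : ℝ) : EReal) < ((log (log (Φ n)) / n : ℝ) : EReal) :=
    eventually_lt_of_lt_liminf (h ▸ EReal.coe_lt_top _)
  filter_upwards [hlt, hΦ, eventually_gt_atTop 0] with n hn hΦn hn0
  rw [EReal.coe_lt_coe_iff, lt_div_iff₀ (by exact_mod_cast hn0), mul_comm,
    Real.lt_log_iff_exp_lt (log_pos hΦn), Real.exp_nat_mul, Real.exp_log hb,
    Real.lt_log_iff_exp_lt (by linarith)] at hn
  exact hn.le

lemma FSet_subset_rapidDigitSet {Φ₁ Φ₂ : ℕ → ℝ}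
    (hΦ₁ : ∀ b > 0, ∀ᶠ n in atTop, exp (b ^ n) ≤ Φ₁ n) : FSet Φ₁ Φ₂ ⊆ rapidDigitSet := by
  rintro x ⟨hx, hx01, hfreq, -⟩
  refine ⟨hx, hx01, fun b hb => ?_⟩
  obtain ⟨n, hprod, hgrowth, hn⟩ := (hfreq.and_eventually
    ((hΦ₁ (2 * b ^ 2) (by positivity)).and (eventually_ge_atTop 1))).exists
  obtain ⟨m, rfl⟩ : ∃ m, n = m + 1 := ⟨n - 1, by omega⟩
  have hpow : 2 * b ^ (m + 2) ≤ (2 * b ^ 2) ^ (m + 1) :=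
    calc 2 * b ^ (m + 2) ≤ 2 ^ (m + 1) * b ^ (2 * (m + 1)) :=
          mul_le_mul (le_self_pow₀ one_le_two m.succ_ne_zero)
            (pow_le_pow_right₀ hb.le (show m + 2 ≤ 2 * (m + 1) by omega))
            (by positivity) (by positivity)
      _ = (2 * b ^ 2) ^ (m + 1) := by ring
  have hsq : exp (b ^ (m + 2)) * exp (b ^ (m + 2)) ≤ (pq x (m + 1) : ℝ) * pq x (m + 2) := by
    rw [← exp_add, ← two_mul]
    push_cast at hprod
    exact (exp_le_exp.2 hpow).trans (hgrowth.trans hprod)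
  by_cases hlast : exp (b ^ (m + 2)) ≤ pq x (m + 2)
  · exact ⟨m + 1, hlast⟩
  have hmono : exp (b ^ (m + 1)) ≤ exp (b ^ (m + 2)) :=
    exp_le_exp.2 (pow_le_pow_right₀ hb.le (by omega))
  refine ⟨m, hmono.trans ?_⟩
  by_contra! hfirst
  have hnonneg (n : ℕ) : (0 : ℝ) ≤ pq x (n + 1) := by
    exact_mod_cast zero_le_one.trans (one_le_pq hx hx01 n)
  exact (mul_lt_mul'' hfirst (not_le.1 hlast) (hnonneg m) (hnonneg (m + 1))).not_ge hsq

theorem statement5_general (Φ₁ Φ₂ : ℕ → ℝ)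
    (htend₁ : Tendsto Φ₁ atTop atTop)
    (hb₁ : liminf (fun n : ℕ => ((Real.log (Real.log (Φ₁ n)) / n : ℝ) : EReal)) atTop = ⊤) :
    dimH (FSet Φ₁ Φ₂) = 0 := by
  have hgrowth : ∀ b > 0, ∀ᶠ n in atTop, exp (b ^ n) ≤ Φ₁ n := fun _ hb =>
    eventually_exp_pow_le_of_liminf_eq_top (htend₁.eventually_gt_atTop 1) hb₁ hb
  exact le_antisymm ((dimH_mono (FSet_subset_rapidDigitSet hgrowth)).trans_eq dimH_rapidDigitSet)
    zero_le

theorem statement5 (Φ₁ Φ₂ : ℕ → ℝ) (hpos₁ : ∀ n, 0 < Φ₁ n) (hpos₂ : ∀ n, 0 < Φ₂ n)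
    (htend₁ : Tendsto Φ₁ atTop atTop) (htend₂ : Tendsto Φ₂ atTop atTop)
    (hb₁ : liminf (fun n : ℕ => ((Real.log (Real.log (Φ₁ n)) / n : ℝ) : EReal)) atTop = ⊤)
    (hb₂ : Tendsto (fun n : ℕ => Real.log (Real.log (Φ₂ n)) / n) atTop atTop) :
    dimH (FSet Φ₁ Φ₂) = 0 :=
  statement5_general Φ₁ Φ₂ htend₁ hb₁
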